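/- arXiv:1402.5886 — 3 statements merged into one kernel-verified Lean document; each statement's English description precedes it below -/
import Mathlib

section
/- Define k_iff as the maximum size of a collection of regions R' such that for every r ∈ R' there exists a hypothesis h with h ∉ r and h ∈ r' for all r' ∈ R' \ {r}. Define k_as as one plus the maximum size of a collection R'' satisfying additionally that some hypothesis lies in every region of R''. Then k_as ≥ k_iff. -/
/-!
Deleting a region `r` from a family in which no region is redundant for the intersection keeps
that property, and the hypothesis showing that `r` was not redundant lies in every remaining
region. So a witness family for `k_iff` minus any one of its regions is a witness family for
`k_as`, of size one less.
-/

open Finset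

section

variable {α β : Type*}

lemma bddAbove_card_of_subset (R : Finset β) (P : Finset β → Prop) :
    BddAbove {m : ℕ | ∃ S : Finset β, S ⊆ R ∧ S.card = m ∧ P S} :=
  ⟨R.card, by rintro _ ⟨S, hSR, rfl, -⟩; exact card_le_card hSR⟩

/-- No region of `S` is redundant for the intersection of `S`. -/
def IsIrredundant (S : Finset (Finset α)) : Prop :=
  ∀ r ∈ S, ∃ h : α, h ∉ r ∧ ∀ r' ∈ S, r' ≠ r → h ∈ r'

namespace IsIrredundant

variable {S T : Finset (Finset α)}

lemma empty : IsIrredundant (∅ : Finset (Finset α)) := by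
  simp [IsIrredundant]

lemma mono (hT : IsIrredundant T) (hST : S ⊆ T) : IsIrredundant S := fun r hr ↦ by
  obtain ⟨h, hhr, hmem⟩ := hT r (hST hr)
  exact ⟨h, hhr, fun r' hr' ↦ hmem r' (hST hr')⟩

lemma exists_mem_forall_erase [DecidableEq α] (hS : IsIrredundant S) {r : Finset α}
    (hr : r ∈ S) : ∃ h : α, ∀ r' ∈ S.erase r, h ∈ r' := by
  obtain ⟨h, -, hmem⟩ := hS r hr
  exact ⟨h, fun r' hr' ↦ hmem r' (mem_of_mem_erase hr') (ne_of_mem_erase hr')⟩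

end IsIrredundant

end

theorem kas_ge_kiff_general {α : Type*} (R : Finset (Finset α)) :
    sSup {m : ℕ | ∃ R' : Finset (Finset α), R' ⊆ R ∧ R'.card = m ∧
        ∀ r ∈ R', ∃ h : α, h ∉ r ∧ ∀ r' ∈ R', r' ≠ r → h ∈ r'} ≤
      1 + sSup {m : ℕ | ∃ R' : Finset (Finset α), R' ⊆ R ∧ R'.card = m ∧
        (∃ h : α, ∀ r ∈ R', h ∈ r) ∧
        ∀ r ∈ R', ∃ h : α, h ∉ r ∧ ∀ r' ∈ R', r' ≠ r → h ∈ r'} := by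
  classical
  refine csSup_le ⟨0, ∅, empty_subset R, card_empty, IsIrredundant.empty⟩ ?_
  rintro _ ⟨S, hSR, rfl, hS : IsIrredundant S⟩
  obtain rfl | ⟨r, hr⟩ := S.eq_empty_or_nonempty
  · simp
  calc S.card = 1 + (S.erase r).card := by rw [← card_erase_add_one hr, add_comm]
    _ ≤ 1 + _ := Nat.add_le_add_left (le_csSup (bddAbove_card_of_subset R _)
        ⟨S.erase r, (erase_subset r S).trans hSR, rfl, hS.exists_mem_forall_erase hr,
          hS.mono (erase_subset r S)⟩) 1

/-- `k_iff` is the maximum size of a collection `R'` of regions such that for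
every `r ∈ R'` some hypothesis lies outside `r` but inside every other region
of `R'`; `k_as` is one plus the maximum size of such a collection additionally
containing a hypothesis common to all its regions.  Then `k_as ≥ k_iff`. -/
theorem kas_ge_kiff {α : Type*} [DecidableEq α] (R : Finset (Finset α)) :
    sSup {m : ℕ | ∃ R' : Finset (Finset α), R' ⊆ R ∧ R'.card = m ∧
        ∀ r ∈ R', ∃ h : α, h ∉ r ∧ ∀ r' ∈ R', r' ≠ r → h ∈ r'} ≤
      1 + sSup {m : ℕ | ∃ R' : Finset (Finset α), R' ⊆ R ∧ R'.card = m ∧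
        (∃ h : α, ∀ r ∈ R', h ∈ r) ∧
        ∀ r ∈ R', ∃ h : α, h ∉ r ∧ ∀ r' ∈ R', r' ≠ r → h ∈ r'} :=
  kas_ge_kiff_general R
end

section
/- Let R be a collection of regions in a finite hypothesis set H, and let k_as be one plus the maximum size of a collection R' of regions satisfying: (1) there exists a hypothesis in every region of R', and (2) for each r ∈ R' there exists h ∉ r with h ∈ r'' for all r'' ∈ R' \ {r}. Then k_as ≤ (max over regions r of the number of distinct subregions contained in r) + 1, where subregions are the equivalence classes of hypotheses under identical region membership. -/
/-!
Fix a witness collection `R'` and one of its regions `r₀`. Send `r₀` to its common hypothesis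
and every other `r ∈ R'` to its witness outside `r`. All these hypotheses lie in `r₀`, and among
the regions of `R'` the image of `r` lies in all of them except `r` itself (in all of them, for
`r₀`). These membership patterns are pairwise distinct, so `r₀` contains at least `|R'|`
subregions.
-/

namespace Regions

variable {α : Type*} [DecidableEq α]

/-- The subregion of `h`, encoded as the set of regions of `R` containing `h`. -/
def subregionOf (R : Finset (Finset α)) (h : α) : Finset (Finset α) :=
  R.filter fun s => h ∈ s

@[simp]
theorem mem_subregionOf {R : Finset (Finset α)} {h : α} {s : Finset α} :
    s ∈ subregionOf R h ↔ s ∈ R ∧ h ∈ s :=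
  Finset.mem_filter

theorem card_le_card_image_subregionOf {R R' : Finset (Finset α)} {r₀ : Finset α}
    (hR' : R' ⊆ R) (hr₀ : r₀ ∈ R') (hcommon : ∃ h : α, ∀ r ∈ R', h ∈ r)
    (hsep : ∀ r ∈ R', ∃ h : α, h ∉ r ∧ ∀ r' ∈ R', r' ≠ r → h ∈ r') :
    R'.card ≤ (r₀.image (subregionOf R)).card := by
  obtain ⟨h₀, hh₀⟩ := hcommon
  have : Nonempty α := ⟨h₀⟩
  choose! w hw_not_mem hw_mem using hsep
  set g : Finset α → α := fun r => if r = r₀ then h₀ else w r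
  have mem_g : ∀ r ∈ R', ∀ s ∈ R', g r ∈ s ↔ s ≠ r ∨ r = r₀ := by
    intro r hr s hs
    by_cases hr0 : r = r₀
    · simp only [g, if_pos hr0]
      exact iff_of_true (hh₀ s hs) (Or.inr hr0)
    · simp only [g, if_neg hr0, or_iff_left hr0]
      exact ⟨fun hws hsr => hw_not_mem r hr (hsr ▸ hws), hw_mem r hr s hs⟩
  have hmaps : ∀ r ∈ R', subregionOf R (g r) ∈ r₀.image (subregionOf R) := fun r hr =>
    Finset.mem_image_of_mem _ ((mem_g r hr r₀ hr₀).2 ((ne_or_eq r₀ r).imp_right Eq.symm))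
  have hinj : Set.InjOn (fun r => subregionOf R (g r)) R' := by
    intro a ha b hb hab
    by_contra hne
    have hpat : ∀ s ∈ R', (s ≠ a ∨ a = r₀) ↔ (s ≠ b ∨ b = r₀) := fun s hs => by
      rw [← mem_g a ha s hs, ← mem_g b hb s hs]
      simpa [hR' hs] using Finset.ext_iff.1 hab s
    have ha0 : a = r₀ := by simpa [hne] using hpat a ha
    have hb0 : b = r₀ := by simpa [Ne.symm hne] using hpat b hb
    exact hne (ha0.trans hb0.symm)
  exact Finset.card_le_card_of_injOn _ hmaps hinj

end Regions

theorem kas_le_max_subregions_general {α : Type*} [DecidableEq α]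
    (R : Finset (Finset α)) :
    1 + sSup {m : ℕ | ∃ R' : Finset (Finset α), R' ⊆ R ∧ R'.card = m ∧
        (∃ h : α, ∀ r ∈ R', h ∈ r) ∧
        ∀ r ∈ R', ∃ h : α, h ∉ r ∧ ∀ r' ∈ R', r' ≠ r → h ∈ r'} ≤
      (R.sup fun r => (r.image fun h => R.filter fun s => h ∈ s).card) + 1 := by
  rw [add_comm]
  refine Nat.add_le_add_right (csSup_le' ?_) 1
  rintro m ⟨R', hR', rfl, hcommon, hsep⟩
  obtain rfl | ⟨r₀, hr₀⟩ := R'.eq_empty_or_nonempty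
  · exact Nat.zero_le _
  calc R'.card ≤ (r₀.image (Regions.subregionOf R)).card :=
        Regions.card_le_card_image_subregionOf hR' hr₀ hcommon hsep
    _ ≤ R.sup fun r => (r.image (Regions.subregionOf R)).card :=
        Finset.le_sup (f := fun r => (r.image (Regions.subregionOf R)).card) (hR' hr₀)

/-- Two hypotheses lie in the same subregion iff they belong to exactly the
same set of regions; the number of distinct subregions contained in a region
`r` is the number of distinct region-membership patterns among hypotheses of
`r`.  Then `k_as` (one plus the maximum size of a collection `R'` of regions
with a common hypothesis and, for each `r ∈ R'`, a hypothesis outside `r` but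
in every other region of `R'`) is at most the maximum over regions `r` of the
number of distinct subregions contained in `r`, plus one. -/
theorem kas_le_max_subregions {α : Type*} [Fintype α] [DecidableEq α]
    (R : Finset (Finset α)) :
    1 + sSup {m : ℕ | ∃ R' : Finset (Finset α), R' ⊆ R ∧ R'.card = m ∧
        (∃ h : α, ∀ r ∈ R', h ∈ r) ∧
        ∀ r ∈ R', ∃ h : α, h ∉ r ∧ ∀ r' ∈ R', r' ≠ r → h ∈ r'} ≤
      (R.sup fun r => (r.image fun h => R.filter fun s => h ∈ s).card) + 1 :=
  kas_le_max_subregions_general R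
end

section
/- Let E be a finite set of hyperedges with rational nonnegative weights w(e) and define f(S) = w(E) − w(E(S)) for evidence S, where E(S) is the set of hyperedges consistent with S under the construction with cardinality k ≥ k_as. Then for any evidence sets S ⊆ S' and any test t not appearing in S', the expected marginal gain satisfies Δ(t | S) ≥ Δ(t | S'), where Δ(t | S) = Σ_h P(h | S)·(f(S ∪ {(t, h(t))}) − f(S)). -/
open scoped Classical

noncomputable section HEC

variable {T O : Type*}

/-- A hypothesis `h : T → O` is consistent with evidence `S`. -/
def consistent (S : Set (T × O)) (h : T → O) : Prop := ∀ p ∈ S, h p.1 = p.2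

variable [DecidableEq (T → O)]

/-- The region-membership pattern of a hypothesis. -/
def memPattern (R : Finset (Finset (T → O))) (h : T → O) :
    Finset (Finset (T → O)) := R.filter fun r => h ∈ r

/-- Subregions: equivalence classes of hypotheses of `H` under identical
region membership. -/
def subregions (H : Finset (T → O)) (R : Finset (Finset (T → O))) :
    Finset (Finset (T → O)) :=
  H.image fun h => H.filter fun h' => memPattern R h' = memPattern R h

/-- Hyperedges of cardinality `k`: multisets of `k` subregions not jointly
contained in any single region. -/
def edges (H : Finset (T → O)) (R : Finset (Finset (T → O))) (k : ℕ) :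
    Finset (Multiset (Finset (T → O))) :=
  (((subregions H R).sym k).image fun s => (s : Multiset (Finset (T → O)))).filter
    fun e => ¬ ∃ r ∈ R, ∀ g ∈ e, g ⊆ r

/-- Probability mass of a subregion restricted to hypotheses consistent
with `S`. -/
def mass (P : (T → O) → ℚ) (S : Set (T × O)) (g : Finset (T → O)) : ℚ :=
  ∑ h ∈ g.filter fun h => consistent S h, P h

/-- Weight of a hyperedge under evidence `S`: product of the (consistent)
masses of its subregions, with multiplicities. -/
def edgeWeight (P : (T → O) → ℚ) (S : Set (T × O))
    (e : Multiset (Finset (T → O))) : ℚ := (e.map (mass P S)).prod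

/-- The HEC objective `f(S) = w(E) − w(E(S))`. -/
def fHEC (H : Finset (T → O)) (R : Finset (Finset (T → O))) (k : ℕ)
    (P : (T → O) → ℚ) (S : Set (T × O)) : ℚ :=
  (∑ e ∈ edges H R k, edgeWeight P (∅ : Set (T × O)) e) -
    ∑ e ∈ edges H R k, edgeWeight P S e

/-- Posterior `P(h ∣ S)`: prior restricted and renormalized to the hypotheses
consistent with `S`. -/
def condP (H : Finset (T → O)) (P : (T → O) → ℚ) (S : Set (T × O))
    (h : T → O) : ℚ :=
  P h / ∑ h' ∈ H.filter fun h' => consistent S h', P h'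

/-- Expected marginal gain `Δ(t ∣ S)` of test `t` given evidence `S`. -/
def delta (H : Finset (T → O)) (R : Finset (Finset (T → O))) (k : ℕ)
    (P : (T → O) → ℚ) (t : T) (S : Set (T × O)) : ℚ :=
  ∑ h ∈ H.filter fun h => consistent S h,
    condP H P S h * (fHEC H R k P (S ∪ {(t, h t)}) - fHEC H R k P S)

/-- `k_as`: one plus the maximum size of a collection of regions with a common
hypothesis and, for each of its regions, a hypothesis outside it but in all its
other regions. -/
def kas (H : Finset (T → O)) (R : Finset (Finset (T → O))) : ℕ :=
  1 + sSup {m : ℕ | ∃ R' : Finset (Finset (T → O)), R' ⊆ R ∧ R'.card = m ∧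
    (∃ h ∈ H, ∀ r ∈ R', h ∈ r) ∧
    ∀ r ∈ R', ∃ h ∈ H, h ∉ r ∧ ∀ r' ∈ R', r' ≠ r → h ∈ r'}

/-!
Let `V` be the set of hypotheses consistent with the evidence and `w V` the total weight of the
hyperedges when every subregion is given its mass inside `V`. The expected gain of a test then
depends on `V` alone, and it suffices that it does not decrease when a single hypothesis `x` is
removed from `V`. This follows from three properties of `w`: it is monotone; it is supermodular,
`w U - w (U \ x) ≤ w V - w (V \ x)` for `U ⊆ V`, being a sum of products of masses; and
`P x * w V ≤ P(V) * (w V - w (V \ x))`. The last inequality is where `k ≥ k_as` enters: in every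
hyperedge one subregion can be exchanged for the subregion of `x` so that the result is still a
hyperedge (otherwise the regions witnessing the failures would form a family of size `k` in the
definition of `k_as`), and the subregions exchanged into a given hyperedge are pairwise distinct,
so their masses add up to at most `P(V)`.
-/

namespace Multiset

variable {ι R : Type*} [CommRing R] [LinearOrder R] [IsStrictOrderedRing R]

theorem prod_map_sub_prod_map_le {s : Multiset ι} {a b c d : ι → R}
    (ha : ∀ i ∈ s, 0 ≤ a i) (hab : ∀ i ∈ s, a i ≤ b i) (hac : ∀ i ∈ s, a i ≤ c i)
    (hd : ∀ i ∈ s, b i - a i ≤ d i - c i) :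
    (s.map b).prod - (s.map a).prod ≤ (s.map d).prod - (s.map c).prod := by
  induction s using Multiset.induction_on with
  | empty => simp
  | cons i s ih =>
    simp only [forall_mem_cons] at ha hab hac hd
    simp only [map_cons, prod_cons]
    have hA : 0 ≤ (s.map a).prod := prod_nonneg fun _ hx => by
      obtain ⟨j, hj, rfl⟩ := mem_map.1 hx; exact ha.2 j hj
    have hAC : (s.map a).prod ≤ (s.map c).prod := prod_map_le_prod_map₀ _ _ ha.2 hac.2
    have hAB : (s.map a).prod ≤ (s.map b).prod := prod_map_le_prod_map₀ _ _ ha.2 hab.2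
    have hbd : b i ≤ d i := by linarith [hac.1, hd.1]
    calc b i * (s.map b).prod - a i * (s.map a).prod
        = b i * ((s.map b).prod - (s.map a).prod) + (b i - a i) * (s.map a).prod := by ring
      _ ≤ d i * ((s.map d).prod - (s.map c).prod) + (d i - c i) * (s.map c).prod := by
        refine add_le_add (mul_le_mul hbd (ih ha.2 hab.2 hac.2 hd.2) ?_ ?_)
          (mul_le_mul hd.1 hAC hA ?_) <;> linarith [ha.1, hab.1, hd.1]
      _ = d i * (s.map d).prod - c i * (s.map c).prod := by ring

end Multiset

section ExpectedGain

variable {α β 𝕜 : Type*} [Field 𝕜] (P : α → 𝕜) (w : Finset α → 𝕜) (τ : α → β)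

def gainNumerator (A : Finset α) : 𝕜 :=
  ∑ h ∈ A, P h * (w A - w (A.filter fun h' => τ h' = τ h))

def expectedGain (A : Finset α) : 𝕜 :=
  gainNumerator P w τ A / ∑ h ∈ A, P h

theorem gainNumerator_eq (A : Finset α) :
    gainNumerator P w τ A =
      (∑ h ∈ A, P h) * w A - ∑ h ∈ A, P h * w (A.filter fun h' => τ h' = τ h) := by
  simp only [gainNumerator, mul_sub, Finset.sum_sub_distrib, Finset.sum_mul]

theorem sum_mul_weight_outcomeClass (A : Finset α) (b : β) :
    ∑ h ∈ A, P h * w (A.filter fun h' => τ h' = τ h) =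
      (∑ h ∈ A.filter (τ · = b), P h) * w (A.filter (τ · = b)) +
        ∑ h ∈ A.filter (τ · ≠ b), P h * w (A.filter fun h' => τ h' = τ h) := by
  rw [← Finset.sum_filter_add_sum_filter_not A (τ · = b), Finset.sum_mul]
  congr 1
  refine Finset.sum_congr rfl fun h hh => ?_
  rw [(Finset.mem_filter.1 hh).2]

theorem sum_mul_weight_outcomeClass_erase [DecidableEq α] (V : Finset α) (x : α) :
    ∑ h ∈ V.erase x, P h * w ((V.erase x).filter fun h' => τ h' = τ h) =
      (∑ h ∈ (V.filter (τ · = τ x)).erase x, P h) * w ((V.filter (τ · = τ x)).erase x) +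
        ∑ h ∈ V.filter (τ · ≠ τ x), P h * w (V.filter fun h' => τ h' = τ h) := by
  have hrest : (V.erase x).filter (τ · ≠ τ x) = V.filter (τ · ≠ τ x) := by
    rw [Finset.filter_erase, Finset.erase_eq_of_notMem (by simp)]
  rw [sum_mul_weight_outcomeClass P w τ _ (τ x), Finset.filter_erase, hrest]
  congr 1
  refine Finset.sum_congr rfl fun h hh => ?_
  have hτ : τ h ≠ τ x := (Finset.mem_filter.1 hh).2
  rw [Finset.filter_erase, Finset.erase_eq_of_notMem (by simp [hτ.symm])]

variable {P w τ} [LinearOrder 𝕜] [IsStrictOrderedRing 𝕜]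

theorem gainNumerator_nonneg (hP : ∀ h, 0 ≤ P h) (hw : Monotone w) (A : Finset α) :
    0 ≤ gainNumerator P w τ A :=
  Finset.sum_nonneg fun h _ => mul_nonneg (hP h) (sub_nonneg.2 (hw (Finset.filter_subset _ _)))

variable [DecidableEq α]

theorem gainNumerator_erase_mul_le (hP : ∀ h, 0 ≤ P h) (hw0 : ∀ A, 0 ≤ w A) (hw : Monotone w)
    (hsuper : ∀ U V x, U ⊆ V → x ∈ U → w U - w (U.erase x) ≤ w V - w (V.erase x))
    {V : Finset α} {x : α} (hx : x ∈ V)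
    (hcore : P x * w V ≤ (∑ h ∈ V, P h) * (w V - w (V.erase x))) :
    gainNumerator P w τ (V.erase x) * ∑ h ∈ V, P h ≤
      gainNumerator P w τ V * ∑ h ∈ V.erase x, P h := by
  set U := V.filter (τ · = τ x)
  set Q := ∑ h ∈ V.filter (τ · ≠ τ x), P h * w (V.filter fun h' => τ h' = τ h)
  have hxU : x ∈ U := Finset.mem_filter.2 ⟨hx, rfl⟩
  have hQ : 0 ≤ Q := Finset.sum_nonneg fun h _ => mul_nonneg (hP h) (hw0 _)
  rw [gainNumerator_eq, gainNumerator_eq, sum_mul_weight_outcomeClass P w τ V (τ x),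
    sum_mul_weight_outcomeClass_erase, Finset.sum_erase_eq_sub hx, Finset.sum_erase_eq_sub hxU]
  have hZU : ∑ h ∈ U, P h ≤ ∑ h ∈ V, P h :=
    Finset.sum_le_sum_of_subset_of_nonneg (Finset.filter_subset _ _) fun h _ _ => hP h
  have hpU : P x ≤ ∑ h ∈ U, P h := Finset.single_le_sum (fun h _ => hP h) hxU
  have hZ : 0 ≤ ∑ h ∈ V, P h := Finset.sum_nonneg fun h _ => hP h
  have hWU : w U ≤ w V := hw (Finset.filter_subset _ _)
  have hs := hsuper U V x (Finset.filter_subset _ _) hxU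
  have hp := hP x
  -- RHS - LHS = Z (Z_U - p) ((w V - w V') - (w U - w U')) + (Z - Z_U) (Z (w V - w V') - p w V)
  --   + p (Z - Z_U) (w V - w U) + p Q, where `Z`, `Z_U`, `p` are the masses of `V`, `U`, `x`
  -- and a prime means that `x` is removed.
  linarith [mul_nonneg (mul_nonneg hZ (sub_nonneg.2 hpU)) (sub_nonneg.2 hs),
    mul_nonneg (sub_nonneg.2 hZU) (sub_nonneg.2 hcore),
    mul_nonneg (mul_nonneg hp (sub_nonneg.2 hZU)) (sub_nonneg.2 hWU), mul_nonneg hp hQ]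

theorem expectedGain_erase_le (hP : ∀ h, 0 ≤ P h) (hw0 : ∀ A, 0 ≤ w A) (hw : Monotone w)
    (hsuper : ∀ U V x, U ⊆ V → x ∈ U → w U - w (U.erase x) ≤ w V - w (V.erase x))
    {V : Finset α} {x : α} (hx : x ∈ V)
    (hcore : P x * w V ≤ (∑ h ∈ V, P h) * (w V - w (V.erase x))) :
    expectedGain P w τ (V.erase x) ≤ expectedGain P w τ V := by
  have hZ' : 0 ≤ ∑ h ∈ V.erase x, P h := Finset.sum_nonneg fun h _ => hP h
  rcases hZ'.eq_or_lt with hZ'0 | hZ'pos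
  · rw [expectedGain, ← hZ'0, div_zero]
    exact div_nonneg (gainNumerator_nonneg hP hw V) (Finset.sum_nonneg fun h _ => hP h)
  · have hZpos : 0 < ∑ h ∈ V, P h := hZ'pos.trans_le <|
      Finset.sum_le_sum_of_subset_of_nonneg (Finset.erase_subset x V) fun h _ _ => hP h
    rw [expectedGain, expectedGain, div_le_div_iff₀ hZ'pos hZpos]
    exact gainNumerator_erase_mul_le hP hw0 hw hsuper hx hcore

theorem expectedGain_mono {Ω V V' : Finset α} (hP : ∀ h, 0 ≤ P h) (hw0 : ∀ A, 0 ≤ w A)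
    (hw : Monotone w)
    (hsuper : ∀ U V x, U ⊆ V → x ∈ U → w U - w (U.erase x) ≤ w V - w (V.erase x))
    (hcore : ∀ V ⊆ Ω, ∀ x ∈ V, P x * w V ≤ (∑ h ∈ V, P h) * (w V - w (V.erase x)))
    (hVΩ : V ⊆ Ω) (hV'V : V' ⊆ V) :
    expectedGain P w τ V' ≤ expectedGain P w τ V := by
  induction V using Finset.strongInduction with
  | _ V ih =>
    by_cases hV' : V' = V
    · rw [hV']
    obtain ⟨x, hxV, hxV'⟩ := Finset.exists_of_ssubset (hV'V.ssubset_of_ne hV')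
    exact (ih (V.erase x) (Finset.erase_ssubset hxV) ((Finset.erase_subset x V).trans hVΩ)
      (Finset.subset_erase.2 ⟨hV'V, hxV'⟩)).trans
      (expectedGain_erase_le hP hw0 hw hsuper hxV (hcore V hVΩ x hxV))

end ExpectedGain

def subregionOf (H : Finset (T → O)) (R : Finset (Finset (T → O))) (x : T → O) :
    Finset (T → O) :=
  H.filter fun h => memPattern R h = memPattern R x

section Subregions

variable {H : Finset (T → O)} {R : Finset (Finset (T → O))} {g r : Finset (T → O)}
  {x : T → O}

theorem mem_subregionOf_self (hx : x ∈ H) : x ∈ subregionOf H R x :=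
  Finset.mem_filter.2 ⟨hx, rfl⟩

theorem mem_subregions_iff : g ∈ subregions H R ↔ ∃ x ∈ H, subregionOf H R x = g :=
  Finset.mem_image

theorem subregionOf_mem_subregions (hx : x ∈ H) : subregionOf H R x ∈ subregions H R :=
  mem_subregions_iff.2 ⟨x, hx, rfl⟩

theorem eq_subregionOf_of_mem (hg : g ∈ subregions H R) (hx : x ∈ g) : g = subregionOf H R x := by
  obtain ⟨y, -, rfl⟩ := mem_subregions_iff.1 hg
  unfold subregionOf
  rw [(Finset.mem_filter.1 hx).2]

theorem subset_of_mem_subregions (hg : g ∈ subregions H R) : g ⊆ H := by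
  obtain ⟨y, -, rfl⟩ := mem_subregions_iff.1 hg
  exact Finset.filter_subset _ _

theorem nonempty_of_mem_subregions (hg : g ∈ subregions H R) : g.Nonempty := by
  obtain ⟨y, hy, rfl⟩ := mem_subregions_iff.1 hg
  exact ⟨y, mem_subregionOf_self hy⟩

theorem subset_of_mem_subregions_of_mem (hg : g ∈ subregions H R) (hr : r ∈ R) (hxg : x ∈ g)
    (hxr : x ∈ r) : g ⊆ r := by
  rw [eq_subregionOf_of_mem hg hxg]
  intro y hy
  have hr' : r ∈ memPattern R y := by
    rw [(Finset.mem_filter.1 hy).2]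
    exact Finset.mem_filter.2 ⟨hr, hxr⟩
  exact (Finset.mem_filter.1 hr').2

theorem pairwiseDisjoint_subregions :
    (subregions H R : Set (Finset (T → O))).PairwiseDisjoint id := by
  intro g hg g' hg' hne
  refine Finset.disjoint_left.2 fun x hx hx' => hne ?_
  rw [eq_subregionOf_of_mem hg hx, eq_subregionOf_of_mem hg' hx']

end Subregions

section Edges

variable {H : Finset (T → O)} {R : Finset (Finset (T → O))} {k : ℕ}
  {e : Multiset (Finset (T → O))} {x : T → O}

theorem mem_edges_iff :
    e ∈ edges H R k ↔
      (Multiset.card e = k ∧ ∀ g ∈ e, g ∈ subregions H R) ∧ ¬∃ r ∈ R, ∀ g ∈ e, g ⊆ r := by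
  -- `edges` coerces each `Sym` to a `Multiset` through the `Finset` monad.
  simp only [edges, Finset.mem_filter, Finset.image_id', bind, pure, Finset.mem_sup,
    Finset.mem_singleton, Finset.mem_sym_iff]
  constructor
  · rintro ⟨⟨s, hs, rfl⟩, hsep⟩
    exact ⟨⟨s.2, hs⟩, hsep⟩
  · rintro ⟨⟨hcard, hsub⟩, hsep⟩
    exact ⟨⟨⟨e, hcard⟩, hsub, rfl⟩, hsep⟩

omit [DecidableEq (T → O)] in
theorem card_lt_kas {R' : Finset (Finset (T → O))} (hR' : R' ⊆ R) (hx : x ∈ H)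
    (hxR' : ∀ r ∈ R', x ∈ r) (hsep : ∀ r ∈ R', ∃ h ∈ H, h ∉ r ∧ ∀ r' ∈ R', r' ≠ r → h ∈ r') :
    R'.card < kas H R := by
  have hbdd : BddAbove {m : ℕ | ∃ R' : Finset (Finset (T → O)), R' ⊆ R ∧ R'.card = m ∧
      (∃ h ∈ H, ∀ r ∈ R', h ∈ r) ∧
      ∀ r ∈ R', ∃ h ∈ H, h ∉ r ∧ ∀ r' ∈ R', r' ≠ r → h ∈ r'} := by
    refine ⟨R.card, ?_⟩
    rintro m ⟨R', hR', rfl, -⟩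
    exact Finset.card_le_card hR'
  have := le_csSup hbdd ⟨R', hR', rfl, ⟨x, hx, hxR'⟩, hsep⟩
  unfold kas
  omega

theorem card_lt_kas_of_forall_cons_erase_subset (hsub : ∀ g ∈ e, g ∈ subregions H R)
    (hsep : ¬∃ r ∈ R, ∀ g ∈ e, g ⊆ r) (hx : x ∈ H) {r : Finset (T → O) → Finset (T → O)}
    (hrR : ∀ g ∈ e, r g ∈ R) (hr : ∀ g ∈ e, ∀ g' ∈ subregionOf H R x ::ₘ e.erase g, g' ⊆ r g) :
    Multiset.card e < kas H R := by
  have hother : ∀ g ∈ e, ∀ g' ∈ e.erase g, g' ⊆ r g :=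
    fun g hg g' hg' => hr g hg g' (Multiset.mem_cons_of_mem hg')
  have hnot : ∀ g ∈ e, ¬g ⊆ r g := by
    intro g hg hgr
    refine hsep ⟨r g, hrR g hg, fun g' hg' => ?_⟩
    by_cases hg'g : g' = g
    · exact hg'g ▸ hgr
    · exact hother g hg g' ((Multiset.mem_erase_of_ne hg'g).2 hg')
  have hnodup : e.Nodup := Multiset.nodup_iff_ne_cons_cons.2 fun g s he => by
    subst he
    exact hnot g (by simp) (hother g (by simp) g (by simp))
  have hinj : Set.InjOn r (e.toFinset : Set (Finset (T → O))) := by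
    intro g hg g' hg' hrr
    by_contra hne
    simp only [Finset.mem_coe, Multiset.mem_toFinset] at hg hg'
    exact hnot g hg (hrr ▸ hother g' hg' g ((Multiset.mem_erase_of_ne hne).2 hg))
  rw [← Multiset.toFinset_card_of_nodup hnodup, ← Finset.card_image_of_injOn hinj]
  refine card_lt_kas (x := x) ?_ hx ?_ ?_ <;>
    simp only [Finset.image_subset_iff, Finset.forall_mem_image, Multiset.mem_toFinset]
  · exact hrR
  · exact fun g hg => hr g hg _ (Multiset.mem_cons_self _ _) (mem_subregionOf_self hx)
  · intro g hg
    obtain ⟨y, hy⟩ := nonempty_of_mem_subregions (hsub g hg)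
    refine ⟨y, subset_of_mem_subregions (hsub g hg) hy,
      fun hyr => hnot g hg (subset_of_mem_subregions_of_mem (hsub g hg) (hrR g hg) hy hyr), ?_⟩
    intro g' hg' hne
    exact hother g' hg' g ((Multiset.mem_erase_of_ne fun h => hne (congrArg r h.symm)).2 hg) hy

theorem exists_cons_erase_mem_edges (hk : kas H R ≤ k) (he : e ∈ edges H R k) (hx : x ∈ H) :
    ∃ g ∈ e, subregionOf H R x ::ₘ e.erase g ∈ edges H R k := by
  obtain ⟨⟨hcard, hsub⟩, hsep⟩ := mem_edges_iff.1 he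
  by_contra! hfail
  have hcovered : ∀ g ∈ e, ∃ r ∈ R, ∀ g' ∈ subregionOf H R x ::ₘ e.erase g, g' ⊆ r := by
    intro g hg
    by_contra hno
    refine hfail g hg (mem_edges_iff.2 ⟨⟨?_, ?_⟩, hno⟩)
    · rw [Multiset.card_cons, Multiset.card_erase_add_one hg, hcard]
    · intro g' hg'
      rcases Multiset.mem_cons.1 hg' with rfl | hg'
      · exact subregionOf_mem_subregions hx
      · exact hsub g' (Multiset.mem_of_mem_erase hg')
  choose! r hrR hr using hcovered
  have := card_lt_kas_of_forall_cons_erase_subset hsub hsep hx hrR hr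
  omega

end Edges

def massIn (P : (T → O) → ℚ) (A g : Finset (T → O)) : ℚ := ∑ h ∈ g ∩ A, P h

def weightIn (P : (T → O) → ℚ) (H : Finset (T → O)) (R : Finset (Finset (T → O))) (k : ℕ)
    (A : Finset (T → O)) : ℚ :=
  ∑ e ∈ edges H R k, (e.map (massIn P A)).prod

section Weight

variable {P : (T → O) → ℚ} {H A B g : Finset (T → O)} {R : Finset (Finset (T → O))} {k : ℕ}
  {x : T → O}

theorem massIn_nonneg (hP : ∀ h, 0 ≤ P h) : 0 ≤ massIn P A g :=
  Finset.sum_nonneg fun h _ => hP h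

theorem massIn_mono (hP : ∀ h, 0 ≤ P h) (hAB : A ⊆ B) : massIn P A g ≤ massIn P B g :=
  Finset.sum_le_sum_of_subset_of_nonneg (Finset.inter_subset_inter_left hAB) fun h _ _ => hP h

theorem massIn_sub_massIn_erase (hx : x ∈ A) :
    massIn P A g - massIn P (A.erase x) g = if x ∈ g then P x else 0 := by
  rw [massIn, massIn, Finset.inter_erase]
  split_ifs with hxg
  · rw [Finset.sum_erase_eq_sub (Finset.mem_inter.2 ⟨hxg, hx⟩)]
    ring
  · rw [Finset.erase_eq_of_notMem fun h => hxg (Finset.mem_inter.1 h).1, sub_self]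

theorem sum_massIn_le (hP : ∀ h, 0 ≤ P h) {G : Finset (Finset (T → O))}
    (hG : G ⊆ subregions H R) : ∑ g ∈ G, massIn P A g ≤ ∑ h ∈ A, P h := by
  have hdisj : (G : Set (Finset (T → O))).PairwiseDisjoint (· ∩ A) := fun g hg g' hg' hne =>
    Finset.disjoint_of_subset_left Finset.inter_subset_left <|
      Finset.disjoint_of_subset_right Finset.inter_subset_left <|
        pairwiseDisjoint_subregions (hG hg) (hG hg') hne
  unfold massIn
  rw [← Finset.sum_biUnion hdisj]
  refine Finset.sum_le_sum_of_subset_of_nonneg ?_ fun h _ _ => hP h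
  simp only [Finset.biUnion_subset_iff_forall_subset, Finset.inter_subset_right, implies_true]

theorem weightIn_nonneg (hP : ∀ h, 0 ≤ P h) : 0 ≤ weightIn P H R k A :=
  Finset.sum_nonneg fun _ _ => Multiset.prod_nonneg fun _ hm => by
    obtain ⟨g, -, rfl⟩ := Multiset.mem_map.1 hm
    exact massIn_nonneg hP

theorem weightIn_mono (hP : ∀ h, 0 ≤ P h) : Monotone (weightIn P H R k) := fun _ _ hAB =>
  Finset.sum_le_sum fun _ _ =>
    Multiset.prod_map_le_prod_map₀ _ _ (fun _ _ => massIn_nonneg hP) fun _ _ => massIn_mono hP hAB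

theorem weightIn_sub_weightIn_erase_le (hP : ∀ h, 0 ≤ P h) {U V : Finset (T → O)} (hUV : U ⊆ V)
    (hx : x ∈ U) :
    weightIn P H R k U - weightIn P H R k (U.erase x) ≤
      weightIn P H R k V - weightIn P H R k (V.erase x) := by
  simp only [weightIn, ← Finset.sum_sub_distrib]
  refine Finset.sum_le_sum fun e _ => Multiset.prod_map_sub_prod_map_le
    (fun _ _ => massIn_nonneg hP) (fun _ _ => massIn_mono hP (Finset.erase_subset x U))
    (fun _ _ => massIn_mono hP (Finset.erase_subset_erase x hUV)) fun g _ => ?_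
  rw [massIn_sub_massIn_erase hx, massIn_sub_massIn_erase (hUV hx)]

end Weight

section Core

variable {P : (T → O) → ℚ} {H V : Finset (T → O)} {R : Finset (Finset (T → O))} {k : ℕ}
  {x : T → O}

theorem mul_prod_map_massIn_le (hP : ∀ h, 0 ≤ P h) {e : Multiset (Finset (T → O))}
    {g : Finset (T → O)} (hge : g ∈ e) (hxV : x ∈ V) (hxg : x ∈ g) :
    P x * (e.map (massIn P V)).prod ≤
      massIn P V g * ((e.map (massIn P V)).prod - (e.map (massIn P (V.erase x))).prod) := by
  rw [← Multiset.cons_erase hge, Multiset.map_cons, Multiset.map_cons, Multiset.prod_cons,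
    Multiset.prod_cons]
  have hdrop : massIn P V g = massIn P (V.erase x) g + P x := by
    have := massIn_sub_massIn_erase (P := P) (g := g) hxV
    rw [if_pos hxg] at this
    linarith
  have hB' : 0 ≤ ((e.erase g).map (massIn P (V.erase x))).prod :=
    Multiset.prod_nonneg fun _ hm => by
      obtain ⟨g', -, rfl⟩ := Multiset.mem_map.1 hm
      exact massIn_nonneg hP
  have hB'B : ((e.erase g).map (massIn P (V.erase x))).prod ≤ ((e.erase g).map (massIn P V)).prod :=
    Multiset.prod_map_le_prod_map₀ _ _ (fun _ _ => massIn_nonneg hP)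
      fun _ _ => massIn_mono hP (Finset.erase_subset x V)
  have ha' : 0 ≤ massIn P (V.erase x) g := massIn_nonneg hP
  rw [hdrop]
  linarith [mul_nonneg (mul_nonneg (add_nonneg ha' (hP x)) ha') (sub_nonneg.2 hB'B)]

theorem sum_massIn_le_of_erase_eq (hP : ∀ h, 0 ≤ P h) {F : Finset (Multiset (Finset (T → O)))}
    {g : Multiset (Finset (T → O)) → Finset (T → O)} (hF : ∀ e ∈ F, e ∈ edges H R k ∧ g e ∈ e)
    (herase : ∀ e₁ ∈ F, ∀ e₂ ∈ F, e₁.erase (g e₁) = e₂.erase (g e₂)) :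
    ∑ e ∈ F, massIn P V (g e) ≤ ∑ h ∈ V, P h := by
  have hinj : Set.InjOn g F := fun e₁ h₁ e₂ h₂ hg => by
    rw [← Multiset.cons_erase (hF e₁ h₁).2, ← Multiset.cons_erase (hF e₂ h₂).2,
      herase e₁ h₁ e₂ h₂, hg]
  rw [← Finset.sum_image hinj]
  refine sum_massIn_le (H := H) (R := R) hP fun g' hg' => ?_
  obtain ⟨e, he, rfl⟩ := Finset.mem_image.1 hg'
  exact (mem_edges_iff.1 (hF e he).1).1.2 _ (hF e he).2

theorem massIn_mul_weightIn_le (hP : ∀ h, 0 ≤ P h) (hk : kas H R ≤ k) (hx : x ∈ H) :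
    massIn P V (subregionOf H R x) * weightIn P H R k V ≤
      (∑ h ∈ V, P h) * ∑ e ∈ (edges H R k).filter (subregionOf H R x ∈ ·),
        (e.map (massIn P V)).prod := by
  set E := edges H R k
  set gx := subregionOf H R x
  set m := massIn P V
  choose! g hge hgE using fun e (he : e ∈ E) => exists_cons_erase_mem_edges hk he hx
  set φ := fun e : Multiset (Finset (T → O)) => gx ::ₘ e.erase (g e)
  have hφ : ∀ e ∈ E, φ e ∈ E.filter (gx ∈ ·) := fun e he =>
    Finset.mem_filter.2 ⟨hgE e he, Multiset.mem_cons_self _ _⟩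
  have hfiber : ∀ e', ∑ e ∈ E with φ e = e', m (g e) ≤ ∑ h ∈ V, P h := by
    refine fun e' => sum_massIn_le_of_erase_eq (H := H) (R := R) (k := k) hP (fun e he => ?_)
      fun e₁ h₁ e₂ h₂ => ?_
    · have he := (Finset.mem_filter.1 he).1
      exact ⟨he, hge e he⟩
    · exact (Multiset.cons_inj_right gx).1 <|
        (Finset.mem_filter.1 h₁).2.trans (Finset.mem_filter.1 h₂).2.symm
  calc m gx * weightIn P H R k V = ∑ e ∈ E, m (g e) * ((φ e).map m).prod := by
        rw [weightIn, Finset.mul_sum]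
        refine Finset.sum_congr rfl fun e he => ?_
        conv_lhs => rw [← Multiset.cons_erase (hge e he)]
        simp only [φ, Multiset.map_cons, Multiset.prod_cons]
        ring
    _ = ∑ e' ∈ E.filter (gx ∈ ·), (∑ e ∈ E with φ e = e', m (g e)) * (e'.map m).prod := by
        rw [← Finset.sum_fiberwise_of_maps_to hφ]
        refine Finset.sum_congr rfl fun e' _ => ?_
        rw [Finset.sum_mul]
        exact Finset.sum_congr rfl fun e he => by rw [(Finset.mem_filter.1 he).2]
    _ ≤ ∑ e' ∈ E.filter (gx ∈ ·), (∑ h ∈ V, P h) * (e'.map m).prod :=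
        Finset.sum_le_sum fun e' _ => mul_le_mul_of_nonneg_right (hfiber e') <|
          Multiset.prod_nonneg fun _ hm => by
            obtain ⟨g', -, rfl⟩ := Multiset.mem_map.1 hm
            exact massIn_nonneg hP
    _ = _ := Finset.mul_sum _ _ _ |>.symm

theorem mul_sum_prod_map_massIn_le (hP : ∀ h, 0 ≤ P h) (hxV : x ∈ V) (hxH : x ∈ H) :
    P x * ∑ e ∈ (edges H R k).filter (subregionOf H R x ∈ ·), (e.map (massIn P V)).prod ≤
      massIn P V (subregionOf H R x) *
        (weightIn P H R k V - weightIn P H R k (V.erase x)) := by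
  rw [weightIn, weightIn, ← Finset.sum_sub_distrib, Finset.mul_sum, Finset.mul_sum]
  refine (Finset.sum_le_sum fun e he => mul_prod_map_massIn_le hP (Finset.mem_filter.1 he).2
    hxV (mem_subregionOf_self hxH)).trans <|
      Finset.sum_le_sum_of_subset_of_nonneg (Finset.filter_subset _ _) fun e _ _ => ?_
  exact mul_nonneg (massIn_nonneg hP) <| sub_nonneg.2 <| Multiset.prod_map_le_prod_map₀ _ _
    (fun _ _ => massIn_nonneg hP) fun _ _ => massIn_mono hP (Finset.erase_subset x V)

theorem mul_weightIn_le (hP : ∀ h, 0 ≤ P h) (hk : kas H R ≤ k) (hxV : x ∈ V) (hxH : x ∈ H) :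
    P x * weightIn P H R k V ≤
      (∑ h ∈ V, P h) * (weightIn P H R k V - weightIn P H R k (V.erase x)) := by
  set a := massIn P V (subregionOf H R x)
  have hZ : 0 ≤ ∑ h ∈ V, P h := Finset.sum_nonneg fun h _ => hP h
  have hD : 0 ≤ weightIn P H R k V - weightIn P H R k (V.erase x) :=
    sub_nonneg.2 (weightIn_mono hP (Finset.erase_subset x V))
  have hpa : P x ≤ a := Finset.single_le_sum (fun h _ => hP h)
    (Finset.mem_inter.2 ⟨mem_subregionOf_self hxH, hxV⟩)
  rcases (hP x).eq_or_lt with hp0 | hpos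
  · rw [← hp0, zero_mul]
    exact mul_nonneg hZ hD
  refine le_of_mul_le_mul_left ?_ (hpos.trans_le hpa)
  calc a * (P x * weightIn P H R k V) = P x * (a * weightIn P H R k V) := by ring
    _ ≤ P x * ((∑ h ∈ V, P h) * ∑ e ∈ (edges H R k).filter (subregionOf H R x ∈ ·),
          (e.map (massIn P V)).prod) :=
        mul_le_mul_of_nonneg_left (massIn_mul_weightIn_le hP hk hxH) (hP x)
    _ = (∑ h ∈ V, P h) * (P x * ∑ e ∈ (edges H R k).filter (subregionOf H R x ∈ ·),
          (e.map (massIn P V)).prod) := by ring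
    _ ≤ (∑ h ∈ V, P h) * (a * (weightIn P H R k V - weightIn P H R k (V.erase x))) :=
        mul_le_mul_of_nonneg_left (mul_sum_prod_map_massIn_le hP hxV hxH) hZ
    _ = a * ((∑ h ∈ V, P h) * (weightIn P H R k V - weightIn P H R k (V.erase x))) := by ring

end Core

section Delta

variable {H : Finset (T → O)} {R : Finset (Finset (T → O))} {k : ℕ} {P : (T → O) → ℚ}

theorem sum_edgeWeight_eq_weightIn (S : Set (T × O)) :
    ∑ e ∈ edges H R k, edgeWeight P S e = weightIn P H R k (H.filter (consistent S)) := by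
  refine Finset.sum_congr rfl fun e he => congrArg Multiset.prod <| Multiset.map_congr rfl
    fun g hg => Finset.sum_congr ?_ fun _ _ => rfl
  have hgH := subset_of_mem_subregions ((mem_edges_iff.1 he).1.2 g hg)
  ext h
  simp only [Finset.mem_filter, Finset.mem_inter]
  exact ⟨fun ⟨hh, hc⟩ => ⟨hh, hgH hh, hc⟩, fun ⟨hh, _, hc⟩ => ⟨hh, hc⟩⟩

omit [DecidableEq (T → O)] in
theorem filter_consistent_union_singleton (S : Set (T × O)) (t : T) (o : O) :
    H.filter (consistent (S ∪ {(t, o)})) = (H.filter (consistent S)).filter (· t = o) := by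
  ext h
  simp only [Finset.mem_filter, consistent, Set.mem_union, Set.mem_singleton_iff]
  constructor
  · rintro ⟨hh, hc⟩
    exact ⟨⟨hh, fun p hp => hc p (Or.inl hp)⟩, hc (t, o) (Or.inr rfl)⟩
  · rintro ⟨⟨hh, hc⟩, ht⟩
    refine ⟨hh, fun p hp => hp.elim (hc p) ?_⟩
    rintro rfl
    exact ht

theorem delta_eq_expectedGain (t : T) (S : Set (T × O)) :
    delta H R k P t S = expectedGain P (weightIn P H R k) (· t) (H.filter (consistent S)) := by
  rw [delta, expectedGain, gainNumerator, Finset.sum_div]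
  refine Finset.sum_congr rfl fun h _ => ?_
  simp only [condP, fHEC, sum_edgeWeight_eq_weightIn, filter_consistent_union_singleton]
  ring

end Delta

theorem hec_adaptive_submodular_general (H : Finset (T → O))
    (R : Finset (Finset (T → O)))
    (P : (T → O) → ℚ) (hP : ∀ h, 0 ≤ P h)
    (k : ℕ) (hk : kas H R ≤ k)
    (S S' : Set (T × O)) (hSS' : S ⊆ S')
    (t : T) :
    delta H R k P t S' ≤ delta H R k P t S := by
  rw [delta_eq_expectedGain, delta_eq_expectedGain]
  exact expectedGain_mono hP (fun _ => weightIn_nonneg hP) (weightIn_mono hP)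
    (fun _ _ _ => weightIn_sub_weightIn_erase_le hP)
    (fun V hVH x hxV => mul_weightIn_le hP hk hxV (hVH hxV)) (Finset.filter_subset _ H)
    (Finset.monotone_filter_right H fun _ _ hc p hp => hc p (hSS' hp))

/-- Adaptive submodularity of the HEC objective (Theorem 2): for a rational
nonnegative prior and hyperedge cardinality `k ≥ k_as`, the expected marginal
gain of any test `t` not appearing in the evidence can only decrease as
evidence accumulates. -/
theorem hec_adaptive_submodular (H : Finset (T → O))
    (R : Finset (Finset (T → O))) (hR : ∀ r ∈ R, r ⊆ H)
    (hcov : ∀ h ∈ H, ∃ r ∈ R, h ∈ r)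
    (P : (T → O) → ℚ) (hP : ∀ h, 0 ≤ P h) (hPsum : ∑ h ∈ H, P h = 1)
    (k : ℕ) (hk : kas H R ≤ k)
    (S S' : Set (T × O)) (hSS' : S ⊆ S')
    (t : T) (ht : ∀ o : O, (t, o) ∉ S') :
    delta H R k P t S' ≤ delta H R k P t S :=
  hec_adaptive_submodular_general H R P hP k hk S S' hSS' t

end HEC
end
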